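/- Invertibility of formal exponentials as multipliers: in W = ℂ[[z, z̄]][[ħ]] with the Wick product, for any g ∈ ℂ[[z, z̄]] with g in the maximal ideal (no constant term) such that g has weight ≥ 3, and any J ∈ W, there exists a unique O ∈ W solving the equation J · e^{Φ/ħ} = e^{Φ/ħ} ⋆ O, where the equation is interpreted order by order in the weight filtration. -/

import Mathlib

/-- `A1 = ℂ[[z, z̄]]`: variable 0 is `z`, variable 1 is `z̄`. -/
abbrev A1 := MvPowerSeries (Fin 2) ℂ

/-- `W1 = ℂ[[z, z̄]][[ħ]]`, the one-variable formal Weyl space. -/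
abbrev W1 := PowerSeries A1

/-- Formal partial derivative with respect to variable `v`. -/
noncomputable def pd (v : Fin 2) (f : A1) : A1 :=
  fun m => ((m v : ℕ) + 1 : ℂ) * f (m + Finsupp.single v 1)

/-- The element `z` of `W1`. -/
noncomputable def zE : W1 := PowerSeries.C (MvPowerSeries.X 0)

/-- The element `z̄` of `W1`. -/
noncomputable def zbarE : W1 := PowerSeries.C (MvPowerSeries.X 1)

/-- The Wick product `f ⋆ g = Σ_{k≥0} (ħ^k/k!) (∂_{z̄}^k f)(∂_z^k g)` on `ℂ[[z, z̄]][[ħ]]`,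
written out coefficientwise in the formal variable ħ. -/
noncomputable def wick (f g : W1) : W1 :=
  PowerSeries.mk fun N =>
    ∑ k ∈ Finset.range (N + 1), ∑ p ∈ Finset.range (N - k + 1),
      ((k.factorial : ℂ)⁻¹ •
        ((pd 1)^[k] (PowerSeries.coeff p f) * (pd 0)^[k] (PowerSeries.coeff (N - k - p) g)))

/-- `∂_z` applied coefficientwise in ħ. -/
noncomputable def DzW (f : W1) : W1 :=
  PowerSeries.mk fun N => pd 0 (PowerSeries.coeff N f)

/-- `∂_{z̄}` applied coefficientwise in ħ. -/
noncomputable def DzbarW (f : W1) : W1 :=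
  PowerSeries.mk fun N => pd 1 (PowerSeries.coeff N f)

/-- The Bell-polynomial sequence `W_k := ħ^k e^{-Φ/ħ} ∂_{z̄}^k (e^{Φ/ħ}) ∈ W` for
`Φ = g ∈ ℂ[[z, z̄]]`, characterized by the recursion `W_0 = 1`,
`W_{k+1} = ħ ∂_{z̄} W_k + (∂_{z̄} g)·W_k`. -/
noncomputable def Wseq (g : A1) : ℕ → W1
  | 0 => 1
  | k + 1 =>
      (PowerSeries.X : W1) * DzbarW (Wseq g k) + PowerSeries.C (pd 1 g) * Wseq g k

/-- The coefficient of `ħ^N z^{m 0} z̄^{m 1}` in an element of `W1`. -/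
noncomputable def coeffAt (N : ℕ) (m : Fin 2 →₀ ℕ) (x : W1) : ℂ :=
  MvPowerSeries.coeff m (PowerSeries.coeff N x)

/-- `O` solves the equation `J·e^{g/ħ} = e^{g/ħ} ⋆ O`, interpreted order by order: after
multiplying by `e^{-g/ħ}` the equation reads `J = Σ_{k≥0} (1/k!) W_k ∂_z^k O`, where
`W_k = ħ^k e^{-g/ħ} ∂_{z̄}^k(e^{g/ħ})`, and the (weight-filtration convergent) sum is
required to hold coefficientwise as a `HasSum` in ℂ. -/
def IsToeplitzSol (g : A1) (J O : W1) : Prop :=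
  ∀ (N : ℕ) (m : Fin 2 →₀ ℕ),
    HasSum (fun k : ℕ =>
        coeffAt N m ((k.factorial : ℂ)⁻¹ • (Wseq g k * DzW^[k] O)))
      (coeffAt N m J)

/-!
Multiplying by `e^{-g/ħ}` turns the equation into `O + Σ_{k ≥ 1} (1/k!) W_k ∂_z^k O = J`.
Since `g` has weight `≥ 3`, `∂_{z̄} g` has weight `≥ 2`, so `W_k` has weight `≥ k + 1` for `k ≥ 1`,
while `∂_z^k` lowers the weight by only `k`. Hence the weight-`w` coefficients of the correction
terms involve only coefficients of `O` of weight `< w`: the map `O ↦ J - Σ_{k ≥ 1} …` is a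
contraction for the weight filtration, and its unique fixed point is found weight by weight.
-/
theorem existsUnique_fixedPoint_of_agree_below {ι α : Type*} [Nonempty α] (wt : ι → ℕ)
    (F : (ι → α) → ι → α)
    (hF : ∀ w x y, (∀ i, wt i < w → x i = y i) → ∀ i, wt i ≤ w → F x i = F y i) :
    ∃! x, F x = x := by
  set x₀ : ι → α := fun _ => Classical.arbitrary α
  have stable : ∀ n k i, wt i < n → F^[n] x₀ i = F^[n + k] x₀ i := by
    intro n
    induction n with
    | zero => intro k i h; omega
    | succ n ih =>
      intro k i h
      rw [add_right_comm, Function.iterate_succ_apply', Function.iterate_succ_apply']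
      exact hF n _ _ (fun j hj => ih k j hj) i (by omega)
  set x : ι → α := fun i => F^[wt i + 1] x₀ i
  have x_eq : ∀ n i, wt i < n → x i = F^[n] x₀ i := fun n i h => by
    simpa [x, Nat.add_sub_cancel' h] using stable (wt i + 1) (n - (wt i + 1)) i (by omega)
  have fixed : F x = x := funext fun i => by
    rw [hF (wt i) x (F^[wt i] x₀) (x_eq (wt i)) i le_rfl, ← Function.iterate_succ_apply' F]
  refine ⟨x, fixed, fun y hy => ?_⟩
  have agree : ∀ w i, wt i < w → y i = x i := by
    intro w
    induction w with
    | zero => intro i h; omega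
    | succ w ih =>
      intro i h
      rw [← hy, ← fixed]
      exact hF w y x ih i (by omega)
  exact funext fun i => agree _ i (lt_add_one _)

namespace FormalToeplitz

open PowerSeries Finset

def weight (N : ℕ) (m : Fin 2 →₀ ℕ) : ℕ := 2 * N + m 0 + m 1

theorem coeffAt_mk (N : ℕ) (m : Fin 2 →₀ ℕ) (f : ℕ → A1) :
    coeffAt N m (PowerSeries.mk f) = f N m := by
  rw [coeffAt, coeff_mk]; rfl

noncomputable def coeffEquiv : W1 ≃ (ℕ × (Fin 2 →₀ ℕ) → ℂ) where
  toFun x i := coeffAt i.1 i.2 x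
  invFun f := PowerSeries.mk fun N => (fun m => f (N, m) : A1)
  left_inv x := by ext N m; exact coeffAt_mk N m _
  right_inv f := funext fun i => coeffAt_mk i.1 i.2 _

theorem coeffAt_coeffEquiv_symm (f : ℕ × (Fin 2 →₀ ℕ) → ℂ) (N : ℕ) (m : Fin 2 →₀ ℕ) :
    coeffAt N m (coeffEquiv.symm f) = f (N, m) :=
  congrFun (coeffEquiv.apply_symm_apply f) (N, m)

theorem ext_coeffAt {x y : W1} (h : ∀ N m, coeffAt N m x = coeffAt N m y) : x = y :=
  coeffEquiv.injective (funext fun i => h i.1 i.2)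

theorem coeffAt_add (N : ℕ) (m : Fin 2 →₀ ℕ) (x y : W1) :
    coeffAt N m (x + y) = coeffAt N m x + coeffAt N m y := by
  simp only [coeffAt, map_add]

theorem coeffAt_sub (N : ℕ) (m : Fin 2 →₀ ℕ) (x y : W1) :
    coeffAt N m (x - y) = coeffAt N m x - coeffAt N m y := by
  simp only [coeffAt, map_sub]

theorem coeffAt_smul (N : ℕ) (m : Fin 2 →₀ ℕ) (c : ℂ) (x : W1) :
    coeffAt N m (c • x) = c * coeffAt N m x := rfl

theorem coeffAt_mul (N : ℕ) (m : Fin 2 →₀ ℕ) (x y : W1) :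
    coeffAt N m (x * y) = ∑ p ∈ antidiagonal N, ∑ q ∈ antidiagonal m,
      coeffAt p.1 q.1 x * coeffAt p.2 q.2 y := by
  simp only [coeffAt, coeff_mul, map_sum, MvPowerSeries.coeff_mul]

theorem coeffAt_one (N : ℕ) (m : Fin 2 →₀ ℕ) :
    coeffAt N m (1 : W1) = if N = 0 ∧ m = 0 then 1 else 0 := by
  by_cases hN : N = 0
  · subst hN; simp [coeffAt, MvPowerSeries.coeff_one]
  · simp [coeffAt, coeff_one, hN]

theorem coeffAt_X (N : ℕ) (m : Fin 2 →₀ ℕ) :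
    coeffAt N m (X : W1) = if N = 1 ∧ m = 0 then 1 else 0 := by
  by_cases hN : N = 1
  · subst hN; simp [coeffAt, MvPowerSeries.coeff_one]
  · simp [coeffAt, coeff_X, hN]

theorem coeffAt_C (N : ℕ) (m : Fin 2 →₀ ℕ) (a : A1) :
    coeffAt N m (C a) = if N = 0 then MvPowerSeries.coeff m a else 0 := by
  by_cases hN : N = 0 <;> simp [coeffAt, coeff_C, hN]

theorem coeffAt_DzW (N : ℕ) (m : Fin 2 →₀ ℕ) (x : W1) :
    coeffAt N m (DzW x) = ((m 0 : ℕ) + 1 : ℂ) * coeffAt N (m + Finsupp.single 0 1) x := by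
  rw [DzW, coeffAt_mk]; rfl

theorem coeffAt_DzbarW (N : ℕ) (m : Fin 2 →₀ ℕ) (x : W1) :
    coeffAt N m (DzbarW x) = ((m 1 : ℕ) + 1 : ℂ) * coeffAt N (m + Finsupp.single 1 1) x := by
  rw [DzbarW, coeffAt_mk]; rfl

theorem coeffAt_iterate_DzW (k N : ℕ) (m : Fin 2 →₀ ℕ) (x : W1) :
    coeffAt N m (DzW^[k] x) =
      ((m 0 + 1).ascFactorial k : ℂ) * coeffAt N (m + Finsupp.single 0 k) x := by
  induction k generalizing x with
  | zero => simp
  | succ k ih =>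
    rw [Function.iterate_succ_apply, ih, coeffAt_DzW, add_assoc, ← Finsupp.single_add,
      Nat.ascFactorial_succ]
    simp only [Finsupp.add_apply, Finsupp.single_eq_same]
    push_cast
    ring

theorem DzbarW_one : DzbarW 1 = 0 :=
  ext_coeffAt fun N m => by
    have : m + Finsupp.single 1 1 ≠ 0 := fun h => by
      simpa using DFunLike.congr_fun h 1
    rw [coeffAt_DzbarW, coeffAt_one, if_neg (not_and_of_not_right _ this), mul_zero]
    simp [coeffAt]

def WeightAtLeast (w : ℕ) (x : W1) : Prop := ∀ N m, weight N m < w → coeffAt N m x = 0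

theorem weightAtLeast_zero (x : W1) : WeightAtLeast 0 x :=
  fun _ _ h => absurd h (Nat.not_lt_zero _)

theorem WeightAtLeast.mono {w w' : ℕ} {x : W1} (hx : WeightAtLeast w x) (h : w' ≤ w) :
    WeightAtLeast w' x :=
  fun N m hN => hx N m (hN.trans_le h)

theorem WeightAtLeast.add {w : ℕ} {x y : W1} (hx : WeightAtLeast w x) (hy : WeightAtLeast w y) :
    WeightAtLeast w (x + y) :=
  fun N m hN => by rw [coeffAt_add, hx N m hN, hy N m hN, add_zero]

theorem weight_add {N N' : ℕ} {m m' : Fin 2 →₀ ℕ} :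
    weight (N + N') (m + m') = weight N m + weight N' m' := by
  simp only [weight, Finsupp.add_apply]; ring

theorem WeightAtLeast.mul {a b : ℕ} {x y : W1} (hx : WeightAtLeast a x) (hy : WeightAtLeast b y) :
    WeightAtLeast (a + b) (x * y) := by
  intro N m hN
  rw [coeffAt_mul]
  refine sum_eq_zero fun p hp => sum_eq_zero fun q hq => ?_
  rw [HasAntidiagonal.mem_antidiagonal] at hp hq
  rw [← hp, ← hq, weight_add] at hN
  by_cases hpq : weight p.1 q.1 < a
  · rw [hx _ _ hpq, zero_mul]
  · rw [hy _ _ (by omega), mul_zero]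

theorem weightAtLeast_X : WeightAtLeast 2 (X : W1) := by
  intro N m hN
  rw [coeffAt_X, if_neg]
  rintro ⟨rfl, rfl⟩
  simp [weight] at hN

theorem weightAtLeast_C_pd_one {g : A1}
    (hg : ∀ m : Fin 2 →₀ ℕ, m 0 + m 1 < 3 → MvPowerSeries.coeff m g = 0) :
    WeightAtLeast 2 (C (pd 1 g)) := by
  intro N m hN
  rw [coeffAt_C]
  split_ifs with h0
  · subst h0
    have hm := hg (m + Finsupp.single 1 1) (by simp [weight] at hN ⊢; omega)
    rw [MvPowerSeries.coeff_apply] at hm ⊢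
    simp [pd, hm]
  · rfl

theorem WeightAtLeast.DzbarW {w : ℕ} {x : W1} (hx : WeightAtLeast (w + 1) x) :
    WeightAtLeast w (DzbarW x) := by
  intro N m hN
  rw [coeffAt_DzbarW, hx _ _ (by simp [weight] at hN ⊢; omega), mul_zero]

theorem weightAtLeast_Wseq_succ {g : A1}
    (hg : ∀ m : Fin 2 →₀ ℕ, m 0 + m 1 < 3 → MvPowerSeries.coeff m g = 0) (k : ℕ) :
    WeightAtLeast (k + 2) (Wseq g (k + 1)) := by
  induction k with
  | zero => simpa [Wseq, DzbarW_one] using weightAtLeast_C_pd_one hg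
  | succ k ih =>
    exact ((weightAtLeast_X.mul ih.DzbarW).mono (by omega)).add
      (((weightAtLeast_C_pd_one hg).mul ih).mono (by omega))

theorem WeightAtLeast.iterate_DzW_sub {w : ℕ} {x y : W1} (h : WeightAtLeast w (x - y)) (k : ℕ) :
    WeightAtLeast (w - k) (DzW^[k] x - DzW^[k] y) := by
  intro N m hN
  rw [coeffAt_sub, coeffAt_iterate_DzW, coeffAt_iterate_DzW, ← mul_sub, ← coeffAt_sub,
    h _ _ (by simp [weight] at hN ⊢; omega), mul_zero]

noncomputable def toeplitzTerm (g : A1) (O : W1) (k N : ℕ) (m : Fin 2 →₀ ℕ) : ℂ :=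
  coeffAt N m ((k.factorial : ℂ)⁻¹ • (Wseq g k * DzW^[k] O))

theorem toeplitzTerm_zero (g : A1) (O : W1) (N : ℕ) (m : Fin 2 →₀ ℕ) :
    toeplitzTerm g O 0 N m = coeffAt N m O := by
  simp [toeplitzTerm, Wseq]

theorem toeplitzTerm_succ_eq_zero {g : A1}
    (hg : ∀ m : Fin 2 →₀ ℕ, m 0 + m 1 < 3 → MvPowerSeries.coeff m g = 0) (O : W1)
    {k N : ℕ} {m : Fin 2 →₀ ℕ} (h : weight N m ≤ k + 1) : toeplitzTerm g O (k + 1) N m = 0 := by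
  rw [toeplitzTerm, coeffAt_smul,
    ((weightAtLeast_Wseq_succ hg k).mul (weightAtLeast_zero _)) N m (by omega), mul_zero]

theorem toeplitzTerm_succ_congr {g : A1}
    (hg : ∀ m : Fin 2 →₀ ℕ, m 0 + m 1 < 3 → MvPowerSeries.coeff m g = 0) {x y : W1} {w : ℕ}
    (hxy : WeightAtLeast w (x - y)) (k : ℕ) {N : ℕ} {m : Fin 2 →₀ ℕ} (hN : weight N m ≤ w) :
    toeplitzTerm g x (k + 1) N m = toeplitzTerm g y (k + 1) N m := by
  have hdiff := (weightAtLeast_Wseq_succ hg k).mul (hxy.iterate_DzW_sub (k + 1))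
  have hcoeff := hdiff N m (by omega)
  rw [mul_sub, coeffAt_sub, sub_eq_zero] at hcoeff
  rw [toeplitzTerm, toeplitzTerm, coeffAt_smul, coeffAt_smul, hcoeff]

theorem hasSum_toeplitzTerm {g : A1}
    (hg : ∀ m : Fin 2 →₀ ℕ, m 0 + m 1 < 3 → MvPowerSeries.coeff m g = 0)
    (O : W1) (N : ℕ) (m : Fin 2 →₀ ℕ) :
    HasSum (fun k => toeplitzTerm g O k N m)
      (coeffAt N m O + ∑ k ∈ range (weight N m), toeplitzTerm g O (k + 1) N m) := by
  rw [add_comm, ← toeplitzTerm_zero g O N m,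
    ← sum_range_succ' (fun k => toeplitzTerm g O k N m)]
  refine hasSum_sum_of_ne_finset_zero fun k hk => ?_
  obtain ⟨k, rfl⟩ : ∃ j, k = j + 1 := ⟨k - 1, by simp at hk; omega⟩
  exact toeplitzTerm_succ_eq_zero hg O (by simp at hk; omega)

/-- Summands with `k + 1 > weight` vanish, so the sum may be truncated at the weight. -/
noncomputable def toeplitzStep (g : A1) (J : W1) (f : ℕ × (Fin 2 →₀ ℕ) → ℂ)
    (i : ℕ × (Fin 2 →₀ ℕ)) : ℂ :=
  coeffAt i.1 i.2 J -
    ∑ k ∈ range (weight i.1 i.2), toeplitzTerm g (coeffEquiv.symm f) (k + 1) i.1 i.2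

theorem isToeplitzSol_iff {g : A1}
    (hg : ∀ m : Fin 2 →₀ ℕ, m 0 + m 1 < 3 → MvPowerSeries.coeff m g = 0) (J O : W1) :
    IsToeplitzSol g J O ↔ toeplitzStep g J (coeffEquiv O) = coeffEquiv O := by
  rw [funext_iff, Prod.forall]
  refine forall₂_congr fun N m => ?_
  have hsum := hasSum_toeplitzTerm hg O N m
  simp only [toeplitzStep, Equiv.symm_apply_apply]
  change HasSum (fun k => toeplitzTerm g O k N m) _ ↔ _ = coeffAt N m O
  rw [sub_eq_iff_eq_add]
  exact ⟨fun h => h.unique hsum, fun h => h ▸ hsum⟩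

theorem toeplitzStep_eq_of_agree_below {g : A1}
    (hg : ∀ m : Fin 2 →₀ ℕ, m 0 + m 1 < 3 → MvPowerSeries.coeff m g = 0) (J : W1) (w : ℕ)
    (f f' : ℕ × (Fin 2 →₀ ℕ) → ℂ) (hf : ∀ i, weight i.1 i.2 < w → f i = f' i)
    (i : ℕ × (Fin 2 →₀ ℕ)) (hi : weight i.1 i.2 ≤ w) :
    toeplitzStep g J f i = toeplitzStep g J f' i := by
  have hdiff : WeightAtLeast w (coeffEquiv.symm f - coeffEquiv.symm f') := fun N m hN => by
    rw [coeffAt_sub, coeffAt_coeffEquiv_symm, coeffAt_coeffEquiv_symm, hf (N, m) hN, sub_self]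
  exact congrArg _ (sum_congr rfl fun k _ => toeplitzTerm_succ_congr hg hdiff k hi)

end FormalToeplitz

/-- invertibility of formal exponentials as multipliers in
`W = ℂ[[z, z̄]][[ħ]]` with the Wick product: for any `g ∈ ℂ[[z, z̄]]` with no constant term
and of weight ≥ 3 (all monomials of total degree < 3 vanish), and any `J ∈ W`, there
exists a unique `O ∈ W` solving `J·e^{g/ħ} = e^{g/ħ} ⋆ O` order by order in the weight
filtration. -/
theorem stmt_14 (g : A1)
    (hg : ∀ m : Fin 2 →₀ ℕ, m 0 + m 1 < 3 → MvPowerSeries.coeff m g = 0)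
    (J : W1) : ∃! O : W1, IsToeplitzSol g J O :=
  (FormalToeplitz.coeffEquiv.existsUnique_congr (FormalToeplitz.isToeplitzSol_iff hg J)).mpr
    (existsUnique_fixedPoint_of_agree_below _ _
      (FormalToeplitz.toeplitzStep_eq_of_agree_below hg J))
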